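/- Let G be a simple connected graph with n ≥ 2 vertices and m edges, and write a_k = d(G,k). Then the numbers b_k = d(μ(G),k) of unordered pairs of distinct vertices of the Mycielskian μ(G) at distance k satisfy: b_1 = 3m + n, b_2 = (n² + 3n)/2 + 3a_2, b_3 = n² − 2m − n + a_3 − 2a_2, b_4 = n(n−1)/2 − m − a_2 − a_3, and b_k = 0 for all k ≥ 5. -/

import Mathlib

open SimpleGraph Polynomial Finset

/-- The Mycielskian `μ(G)` of a simple graph `G`. Vertices `Sum.inl v` are the original
vertices `v_i`, vertices `Sum.inr (Sum.inl v)` are the shadow vertices `u_i`, and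
`Sum.inr (Sum.inr ())` is the apex vertex `w`.  Edges: the edges of `G`, the edges `w u_i`,
and the edges `u_i v_j`, `u_j v_i` for every edge `v_i v_j` of `G`. -/
def mycielskian {V : Type*} (G : SimpleGraph V) : SimpleGraph (V ⊕ V ⊕ Unit) :=
  SimpleGraph.fromRel (fun a b =>
    match a, b with
    | Sum.inl a, Sum.inl b => G.Adj a b
    | Sum.inl a, Sum.inr (Sum.inl b) => G.Adj a b
    | Sum.inr (Sum.inl _), Sum.inr (Sum.inr _) => True
    | _, _ => False)

/-- `distCount G k` is `d(G,k)`, the number of unordered pairs of distinct vertices of `G`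
whose graph distance is exactly `k`. -/
noncomputable def distCount {V : Type*} (G : SimpleGraph V) (k : ℕ) : ℕ :=
  Nat.card {e : Sym2 V // ¬ e.IsDiag ∧ Sym2.lift ⟨G.dist, fun _ _ => G.dist_comm⟩ e = k}

/-- The Hosoya polynomial `H(G,x) = Σ_{k=1}^{D(G)} d(G,k) x^k` (with rational coefficients). -/
noncomputable def hosoya {V : Type*} (G : SimpleGraph V) : Polynomial ℚ :=
  ∑ k ∈ Finset.Icc 1 G.diam, (distCount G k : ℚ) • Polynomial.X ^ k

/-- The Wiener index `W(G)`: the sum of distances over all unordered pairs of distinct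
vertices (the diagonal contributes `0`, so we may sum over ordered pairs and halve). -/
noncomputable def wiener {V : Type*} (G : SimpleGraph V) [Fintype V] : ℚ :=
  (∑ u : V, ∑ v : V, (G.dist u v : ℚ)) / 2

/-- The Hyper-Wiener index `WW(G) = (1/2) Σ_{{u,v}} (d(u,v)² + d(u,v))`. -/
noncomputable def hyperWiener {V : Type*} (G : SimpleGraph V) [Fintype V] : ℚ :=
  (∑ u : V, ∑ v : V, ((G.dist u v : ℚ) ^ 2 + (G.dist u v : ℚ))) / 4

/-- The TSZ index `TSZ(G) = (1/6) Σ_{{u,v}} d³ + (1/2) Σ_{{u,v}} d² + (1/3) Σ_{{u,v}} d`. -/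
noncomputable def tszIndex {V : Type*} (G : SimpleGraph V) [Fintype V] : ℚ :=
  (∑ u : V, ∑ v : V, (G.dist u v : ℚ) ^ 3) / 12
    + (∑ u : V, ∑ v : V, (G.dist u v : ℚ) ^ 2) / 4
    + (∑ u : V, ∑ v : V, (G.dist u v : ℚ)) / 6

/-- The Harary index `Har(G) = Σ_{{u,v}} 1/d(u,v)` (diagonal terms are `0⁻¹ = 0`). -/
noncomputable def harary {V : Type*} (G : SimpleGraph V) [Fintype V] : ℚ :=
  (∑ u : V, ∑ v : V, ((G.dist u v : ℚ))⁻¹) / 2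

/-- The closeness `C(G) = Σ_u Σ_{v ≠ u} 2^{-d(u,v)}` over ordered pairs of distinct vertices. -/
noncomputable def closeness {V : Type*} (G : SimpleGraph V) [Fintype V] : ℚ :=
  letI := Classical.decEq V
  ∑ u : V, ∑ v : V, if v = u then 0 else ((1 : ℚ) / 2) ^ (G.dist u v)

/-- `σ_{uv}`: the number of shortest paths (walks of length `dist u v`) from `u` to `v`. -/
noncomputable def numSP {V : Type*} (G : SimpleGraph V) (u v : V) : ℕ :=
  Nat.card {p : G.Walk u v // p.length = G.dist u v}

/-- `σ_{uv}(w)`: the number of shortest paths from `u` to `v` passing through `w`. -/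
noncomputable def numSPthrough {V : Type*} (G : SimpleGraph V) (w u v : V) : ℕ :=
  Nat.card {p : G.Walk u v // p.length = G.dist u v ∧ w ∈ p.support}

/-- The betweenness centrality `B_w = Σ_{{u,v}, u ≠ w ≠ v} σ_{uv}(w)/σ_{uv}` of a vertex `w`,
summed over unordered pairs of distinct vertices (ordered pairs, halved). -/
noncomputable def btwVertex {V : Type*} (G : SimpleGraph V) [Fintype V] (w : V) : ℚ :=
  letI := Classical.decEq V
  (∑ u : V, ∑ v : V,
    if u ≠ v ∧ u ≠ w ∧ v ≠ w then (numSPthrough G w u v : ℚ) / (numSP G u v) else 0) / 2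

/-- The betweenness centrality of a graph: `B⁻(G) = (1/N) Σ_w B_w`. -/
noncomputable def btw {V : Type*} (G : SimpleGraph V) [Fintype V] : ℚ :=
  (∑ w : V, btwVertex G w) / (Fintype.card V)

/-- The star graph `S_n`: center `0` joined to the `n` leaves `1, …, n`. -/
def starGraph (n : ℕ) : SimpleGraph (Fin (n + 1)) :=
  SimpleGraph.fromRel (fun a _ => a = 0)

/-- The join `G₁ ⊕ G₂` of two graphs on disjoint vertex sets: all edges of `G₁`, all edges
of `G₂`, and all edges between `V(G₁)` and `V(G₂)`. -/
def joinGraph {V₁ V₂ : Type*} (G₁ : SimpleGraph V₁) (G₂ : SimpleGraph V₂) :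
    SimpleGraph (V₁ ⊕ V₂) :=
  SimpleGraph.fromRel (fun a b =>
    match a, b with
    | Sum.inl a, Sum.inl b => G₁.Adj a b
    | Sum.inr a, Sum.inr b => G₂.Adj a b
    | Sum.inl _, Sum.inr _ => True
    | _, _ => False)

/-!
Every distance in `μ(G)` is an explicit function of a distance in `G`:
`d(v_a, v_b) = min (d(a, b)) 4`, `d(u_a, v_b) = min (d(a, b)) 3` for `a ≠ b`,
`d(u_a, v_a) = d(u_a, u_b) = d(v_a, w) = 2` and `d(u_a, w) = 1`. The upper bounds come from
walks of `G` lifted to `μ(G)` and from detours through the apex `w`; the lower bounds from a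
height function on `μ(G)` that vanishes at `v_a` and is `1`-Lipschitz. So the sum of a weight
`g (d(x, y))` over ordered pairs of vertices of `μ(G)` is a sum of such weighted sums over `G`,
which only see the truncated distances `min (d(a, b)) 4` and are therefore determined by `n`,
`a₁ = m`, `a₂` and `a₃`. The weight `g = δ_k` counts each pair at distance `k ≠ 0` twice.
-/
namespace SimpleGraph

variable {V : Type*} {G : SimpleGraph V}

lemma Walk.apply_le_add_length {f : V → ℕ} (hf : ∀ x y, G.Adj x y → f y ≤ f x + 1)
    {u v : V} (p : G.Walk u v) : f v ≤ f u + p.length := by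
  induction p with
  | nil => simp
  | cons h _ ih => have := hf _ _ h; rw [Walk.length_cons]; omega

lemma Reachable.apply_le_add_dist {f : V → ℕ} (hf : ∀ x y, G.Adj x y → f y ≤ f x + 1)
    {u v : V} (hr : G.Reachable u v) : f v ≤ f u + G.dist u v := by
  obtain ⟨p, hp⟩ := hr.exists_walk_length_eq_dist
  exact hp ▸ p.apply_le_add_length hf

def distGraph (G : SimpleGraph V) (k : ℕ) : SimpleGraph V :=
  fromRel fun x y => G.dist x y = k

@[simp]
lemma distGraph_adj {k : ℕ} {x y : V} :
    (G.distGraph k).Adj x y ↔ x ≠ y ∧ G.dist x y = k := by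
  simp [distGraph, dist_comm]

lemma distGraph_one : G.distGraph 1 = G := by
  ext x y
  simpa using Adj.ne

lemma distCount_eq_card_edgeSet (k : ℕ) : distCount G k = Nat.card (G.distGraph k).edgeSet :=
  Nat.card_congr <| Equiv.subtypeEquivRight fun e => by induction e using Sym2.ind; simp

lemma distCount_one : distCount G 1 = Nat.card G.edgeSet := by
  rw [distCount_eq_card_edgeSet, distGraph_one]

variable [Fintype V]

noncomputable def distSum (G : SimpleGraph V) : (ℕ → ℚ) →ₗ[ℚ] ℚ where
  toFun g := ∑ x, ∑ y, g (G.dist x y)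
  map_add' g g' := by simp [sum_add_distrib]
  map_smul' c g := by simp [mul_sum]

lemma distSum_apply (g : ℕ → ℚ) : G.distSum g = ∑ x, ∑ y, g (G.dist x y) := rfl

lemma distSum_one : G.distSum 1 = Fintype.card V ^ 2 := by
  simp [distSum_apply, sq]

lemma distSum_single_zero (hc : G.Connected) : G.distSum (Pi.single 0 1) = Fintype.card V := by
  classical
  simp only [distSum_apply, Pi.single_apply, hc.dist_eq_zero_iff]
  simp

lemma distSum_single {k : ℕ} (hk : k ≠ 0) : G.distSum (Pi.single k 1) = 2 * distCount G k := by
  classical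
  have hpairs := (G.distGraph k).two_mul_card_edgeFinset
  rw [edgeFinset_card, ← Nat.card_eq_fintype_card, ← distCount_eq_card_edgeSet] at hpairs
  rw [← Nat.cast_two, ← Nat.cast_mul, hpairs, distSum_apply, card_filter, ← univ_product_univ,
    sum_product]
  push_cast
  refine sum_congr rfl fun x _ => sum_congr rfl fun y _ => ?_
  rcases eq_or_ne x y with rfl | hxy
  · simp [hk.symm]
  · simp [Pi.single_apply, hxy]

lemma distSum_eq_of_forall_four_le (hc : G.Connected) {g : ℕ → ℚ}
    (hg : ∀ j, 4 ≤ j → g j = g 4) :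
    G.distSum g = Fintype.card V * g 0 + 2 * distCount G 1 * g 1 + 2 * distCount G 2 * g 2
      + 2 * distCount G 3 * g 3 + (Fintype.card V ^ 2 - Fintype.card V - 2 * distCount G 1
        - 2 * distCount G 2 - 2 * distCount G 3) * g 4 := by
  have hg' : g = g 0 • Pi.single 0 1 + g 1 • Pi.single 1 1 + g 2 • Pi.single 2 1
      + g 3 • Pi.single 3 1
      + g 4 • (1 - Pi.single 0 1 - Pi.single 1 1 - Pi.single 2 1 - Pi.single 3 1) := by
    funext j
    obtain rfl | rfl | rfl | rfl | hj : j = 0 ∨ j = 1 ∨ j = 2 ∨ j = 3 ∨ 4 ≤ j := by omega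
    iterate 4 simp
    · obtain ⟨i, rfl⟩ := Nat.exists_eq_add_of_le' hj
      simp [hg _ hj]
  conv_lhs => rw [hg']
  simp only [map_add, map_smul, map_sub, distSum_one, distSum_single_zero hc,
    distSum_single one_ne_zero, distSum_single two_ne_zero, distSum_single three_ne_zero,
    smul_eq_mul]
  ring

end SimpleGraph

section Mycielskian

variable {V : Type*} {G : SimpleGraph V} {a b : V}

@[simp]
lemma mycielskian_adj_inl_inl : (mycielskian G).Adj (.inl a) (.inl b) ↔ G.Adj a b := by
  simpa [mycielskian, G.adj_comm b a] using Adj.ne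

@[simp]
lemma mycielskian_adj_inl_inr_inl : (mycielskian G).Adj (.inl a) (.inr (.inl b)) ↔ G.Adj a b := by
  simp [mycielskian]

@[simp]
lemma mycielskian_adj_inr_inl_inl : (mycielskian G).Adj (.inr (.inl a)) (.inl b) ↔ G.Adj a b := by
  simp [mycielskian, G.adj_comm]

@[simp]
lemma mycielskian_not_adj_inr_inl_inr_inl :
    ¬(mycielskian G).Adj (.inr (.inl a)) (.inr (.inl b)) := by
  simp [mycielskian]

@[simp]
lemma mycielskian_adj_inr_inl_inr_inr : (mycielskian G).Adj (.inr (.inl a)) (.inr (.inr ())) := by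
  simp [mycielskian]

@[simp]
lemma mycielskian_not_adj_inl_inr_inr : ¬(mycielskian G).Adj (.inl a) (.inr (.inr ())) := by
  simp [mycielskian]

@[simp]
lemma mycielskian_not_adj_inr_inr_inl : ¬(mycielskian G).Adj (.inr (.inr ())) (.inl a) := by
  simp [mycielskian]

def mycielskianInl (G : SimpleGraph V) : G →g mycielskian G :=
  ⟨Sum.inl, mycielskian_adj_inl_inl.2⟩

lemma mycielskian_dist_inr_inl_inr_inr (a : V) :
    (mycielskian G).dist (.inr (.inl a)) (.inr (.inr ())) = 1 :=
  dist_eq_one_iff_adj.2 mycielskian_adj_inr_inl_inr_inr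

lemma mycielskian_dist_inr_inr_inr_inl (a : V) :
    (mycielskian G).dist (.inr (.inr ())) (.inr (.inl a)) = 1 := by
  rw [SimpleGraph.dist_comm, mycielskian_dist_inr_inl_inr_inr]

/-- A height function certifying lower bounds for distances from `v_a` in `μ(G)`. -/
noncomputable def mycielskianHeight (G : SimpleGraph V) (a : V) : V ⊕ V ⊕ Unit → ℕ
  | .inl c => min (G.dist a c) 4
  | .inr (.inl c) => max 1 (min (G.dist a c) 3)
  | .inr (.inr _) => 2

lemma mycielskianHeight_le_add_one (a : V) {x y : V ⊕ V ⊕ Unit} (h : (mycielskian G).Adj x y) :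
    mycielskianHeight G a y ≤ mycielskianHeight G a x + 1 := by
  rcases x with c | c | ⟨⟨⟩⟩ <;> rcases y with c' | c' | ⟨⟨⟩⟩ <;>
    simp [mycielskianHeight] at h ⊢
  all_goals have := h.diff_dist_adj (u := a); omega

end Mycielskian

section MycielskianDist

variable {V : Type*} {G : SimpleGraph V} [Nontrivial V]

lemma mycielskian_connected (hc : G.Connected) : (mycielskian G).Connected := by
  have reach_apex : ∀ x, (mycielskian G).Reachable x (.inr (.inr ())) := by
    rintro (a | a | ⟨⟨⟩⟩)
    · obtain ⟨b, hab⟩ := hc.preconnected.exists_adj_of_nontrivial a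
      exact (mycielskian_adj_inl_inr_inl.2 hab).reachable.trans
        mycielskian_adj_inr_inl_inr_inr.reachable
    · exact mycielskian_adj_inr_inl_inr_inr.reachable
    · rfl
  exact (connected_iff _).2
    ⟨fun x y => (reach_apex x).trans (reach_apex y).symm, ⟨.inr (.inr ())⟩⟩

lemma mycielskianHeight_le_dist (hc : G.Connected) (a : V) (x : V ⊕ V ⊕ Unit) :
    mycielskianHeight G a x ≤ (mycielskian G).dist (.inl a) x := by
  simpa [mycielskianHeight] using (mycielskian_connected hc (.inl a) x).apply_le_add_dist
    fun _ _ h => mycielskianHeight_le_add_one a h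

lemma mycielskian_dist_inl_inr_inr (hc : G.Connected) (a : V) :
    (mycielskian G).dist (.inl a) (.inr (.inr ())) = 2 := by
  obtain ⟨b, hab⟩ := hc.preconnected.exists_adj_of_nontrivial a
  have upper := (mycielskian_connected hc).dist_triangle (u := .inl a) (v := .inr (.inl b))
    (w := .inr (.inr ()))
  rw [dist_eq_one_iff_adj.2 (mycielskian_adj_inl_inr_inl.2 hab),
    mycielskian_dist_inr_inl_inr_inr] at upper
  exact le_antisymm upper (mycielskianHeight_le_dist hc a (.inr (.inr ())))

lemma mycielskian_dist_inr_inr_inl (hc : G.Connected) (a : V) :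
    (mycielskian G).dist (.inr (.inr ())) (.inl a) = 2 := by
  rw [SimpleGraph.dist_comm, mycielskian_dist_inl_inr_inr hc]

lemma mycielskian_dist_inl_inl (hc : G.Connected) (a b : V) :
    (mycielskian G).dist (.inl a) (.inl b) = min (G.dist a b) 4 := by
  obtain ⟨p, hp⟩ := hc.exists_walk_length_eq_dist a b
  have upper_dist := dist_le (p.map (mycielskianInl G))
  rw [Walk.length_map, hp] at upper_dist
  have upper_apex := (mycielskian_connected hc).dist_triangle (u := .inl a) (v := .inr (.inr ()))
    (w := .inl b)
  rw [mycielskian_dist_inl_inr_inr hc, mycielskian_dist_inr_inr_inl hc] at upper_apex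
  exact le_antisymm (le_min upper_dist upper_apex) (mycielskianHeight_le_dist hc a (.inl b))

variable [DecidableEq V]

lemma mycielskian_dist_inr_inl_inl (hc : G.Connected) (a b : V) :
    (mycielskian G).dist (.inr (.inl a)) (.inl b) = if a = b then 2 else min (G.dist a b) 3 := by
  have hμ := mycielskian_connected hc
  split_ifs with hab
  · subst hab
    obtain ⟨c, hac⟩ := hc.preconnected.exists_adj_of_nontrivial a
    have upper := hμ.dist_triangle (u := .inr (.inl a)) (v := .inl c) (w := .inl a)
    rw [dist_eq_one_iff_adj.2 (mycielskian_adj_inr_inl_inl.2 hac),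
      dist_eq_one_iff_adj.2 (mycielskian_adj_inl_inl.2 hac.symm)] at upper
    exact le_antisymm upper (hμ.one_lt_dist_of_ne_of_not_adj (by simp) (by simp))
  · obtain ⟨p, hp⟩ := hc.exists_walk_length_eq_dist a b
    have upper_dist : (mycielskian G).dist (.inr (.inl a)) (.inl b) ≤ G.dist a b := by
      cases p with
      | nil => exact absurd rfl hab
      | cons h q =>
        let r : (mycielskian G).Walk (.inr (.inl a)) (.inl b) :=
          .cons (mycielskian_adj_inr_inl_inl.2 h) (q.map (mycielskianInl G))
        calc _ ≤ r.length := dist_le r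
          _ = (q.map (mycielskianInl G)).length + 1 := rfl
          _ = G.dist a b := by simp [← hp]
    have upper_apex := hμ.dist_triangle (u := .inr (.inl a)) (v := .inr (.inr ())) (w := .inl b)
    rw [mycielskian_dist_inr_inl_inr_inr, mycielskian_dist_inr_inr_inl hc] at upper_apex
    have lower : max 1 (min (G.dist b a) 3) ≤ _ := mycielskianHeight_le_dist hc b (.inr (.inl a))
    rw [G.dist_comm, (mycielskian G).dist_comm] at lower
    have := hc.pos_dist_of_ne hab
    omega

lemma mycielskian_dist_inl_inr_inl (hc : G.Connected) (a b : V) :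
    (mycielskian G).dist (.inl a) (.inr (.inl b)) = if a = b then 2 else min (G.dist a b) 3 := by
  rw [SimpleGraph.dist_comm, mycielskian_dist_inr_inl_inl hc, G.dist_comm]
  exact if_congr eq_comm rfl rfl

lemma mycielskian_dist_inr_inl_inr_inl (hc : G.Connected) (a b : V) :
    (mycielskian G).dist (.inr (.inl a)) (.inr (.inl b)) = if a = b then 0 else 2 := by
  have hμ := mycielskian_connected hc
  split_ifs with hab
  · simp [hab]
  have upper := hμ.dist_triangle (u := .inr (.inl a)) (v := .inr (.inr ())) (w := .inr (.inl b))
  rw [mycielskian_dist_inr_inl_inr_inr, mycielskian_dist_inr_inr_inr_inl] at upper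
  exact le_antisymm upper (hμ.one_lt_dist_of_ne_of_not_adj (by simpa) (by simp))

end MycielskianDist

section MycielskianDistSum

variable {V : Type*} [Fintype V] [Nontrivial V] {G : SimpleGraph V}

theorem distSum_mycielskian_eq_distSum (hc : G.Connected) (g : ℕ → ℚ) :
    (mycielskian G).distSum g = G.distSum (fun j => g (min j 4))
      + 2 * G.distSum (fun j => if j = 0 then g 2 else g (min j 3))
      + G.distSum (fun j => if j = 0 then g 0 else g 2)
      + 2 * Fintype.card V * (g 1 + g 2) + g 0 := by
  classical
  simp only [distSum_apply, Fintype.sum_sum_type, Fintype.sum_unique, mycielskian_dist_inl_inl hc,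
    mycielskian_dist_inl_inr_inl hc, mycielskian_dist_inr_inl_inl hc,
    mycielskian_dist_inr_inl_inr_inl hc, mycielskian_dist_inl_inr_inr hc,
    mycielskian_dist_inr_inr_inl hc, mycielskian_dist_inr_inl_inr_inr,
    mycielskian_dist_inr_inr_inr_inl, ← hc.dist_eq_zero_iff, PUnit.default_eq_unit, dist_self,
    apply_ite g, sum_add_distrib, sum_const, card_univ, nsmul_eq_mul, Fintype.card_unit,
    Nat.cast_one]
  ring

theorem distSum_mycielskian (hc : G.Connected) (g : ℕ → ℚ) :
    (mycielskian G).distSum g = (2 * Fintype.card V + 1) * g 0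
      + (6 * distCount G 1 + 2 * Fintype.card V) * g 1
      + (6 * distCount G 2 + Fintype.card V ^ 2 + 3 * Fintype.card V) * g 2
      + (6 * distCount G 3 + 2 * (Fintype.card V ^ 2 - Fintype.card V - 2 * distCount G 1
          - 2 * distCount G 2 - 2 * distCount G 3)) * g 3
      + (Fintype.card V ^ 2 - Fintype.card V - 2 * distCount G 1 - 2 * distCount G 2
          - 2 * distCount G 3) * g 4 := by
  rw [distSum_mycielskian_eq_distSum hc,
    distSum_eq_of_forall_four_le hc (g := fun j => g (min j 4)) fun j hj => by simp [hj],
    distSum_eq_of_forall_four_le hc (g := fun j => if j = 0 then g 2 else g (min j 3))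
      fun j hj => by simp [show j ≠ 0 by omega, show 3 ≤ j by omega],
    distSum_eq_of_forall_four_le hc (g := fun j => if j = 0 then g 0 else g 2)
      fun j hj => by simp [show j ≠ 0 by omega]]
  simp only [zero_le, inf_of_le_left, Nat.one_le_ofNat, Nat.reduceLeDiff, ↓reduceIte,
    one_ne_zero, OfNat.ofNat_ne_zero, inf_of_le_right]
  ring

end MycielskianDistSum

/-- For a connected graph `G` with `n ≥ 2` vertices and `m` edges, with
`a_k = d(G,k)`, the counts `b_k = d(μ(G),k)` satisfy `b₁ = 3m+n`,
`b₂ = (n²+3n)/2 + 3a₂`, `b₃ = n² - 2m - n + a₃ - 2a₂`, `b₄ = n(n-1)/2 - m - a₂ - a₃`,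
and `b_k = 0` for `k ≥ 5`. -/
theorem stmt_7 {V : Type*} [Fintype V] (G : SimpleGraph V) (n m : ℕ)
    (hn : Fintype.card V = n) (hn2 : 2 ≤ n) (hm : Nat.card G.edgeSet = m)
    (hc : G.Connected) :
    distCount (mycielskian G) 1 = 3 * m + n ∧
    (distCount (mycielskian G) 2 : ℚ) =
      ((n : ℚ) ^ 2 + 3 * n) / 2 + 3 * distCount G 2 ∧
    (distCount (mycielskian G) 3 : ℚ) =
      (n : ℚ) ^ 2 - 2 * m - n + distCount G 3 - 2 * distCount G 2 ∧
    (distCount (mycielskian G) 4 : ℚ) =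
      (n : ℚ) * ((n : ℚ) - 1) / 2 - m - distCount G 2 - distCount G 3 ∧
    ∀ k : ℕ, 5 ≤ k → distCount (mycielskian G) k = 0 := by
  have : Nontrivial V := Fintype.one_lt_card_iff_nontrivial.1 (by omega)
  have count (k : ℕ) (hk : k ≠ 0) :=
    (distSum_single (G := mycielskian G) hk).symm.trans (distSum_mycielskian hc (Pi.single k 1))
  rw [← distCount_one] at hm
  subst hn hm
  refine ⟨?_, ?_, ?_, ?_, fun k hk => ?_⟩
  · have h := count 1 one_ne_zero
    norm_num [Pi.single_apply] at h
    norm_cast at h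
    omega
  · have h := count 2 two_ne_zero
    norm_num [Pi.single_apply] at h
    linarith
  · have h := count 3 three_ne_zero
    norm_num [Pi.single_apply] at h
    linarith
  · have h := count 4 four_ne_zero
    norm_num [Pi.single_apply] at h
    linarith
  · obtain ⟨i, rfl⟩ := Nat.exists_eq_add_of_le' hk
    have h := count (i + 5) (by omega)
    norm_num [Pi.single_apply] at h
    exact h
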